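/- For the channel Λ'(ρ) = Σⱼ Vⱼ ρ Vⱼ† with Vⱼ ∈ (1/2){I⊗I, X⊗X, Z⊗Z, −Y⊗Y}, there do not exist density matrices τ_A, τ_B (as functions of the inputs) such that Λ'(σ_A ⊗ σ_B) = τ_A ⊗ τ_B for all density matrices σ_A, σ_B; i.e., the second-qubit subsystem is private but not operator private for Λ'. -/

import Mathlib

open Matrix Kronecker ComplexOrder

noncomputable section

def PX : Matrix (Fin 2) (Fin 2) ℂ := !![0, 1; 1, 0]
def PY : Matrix (Fin 2) (Fin 2) ℂ := !![0, -Complex.I; Complex.I, 0]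
def PZ : Matrix (Fin 2) (Fin 2) ℂ := !![1, 0; 0, -1]

/-- The channel Λ' with Kraus operators (1/2){II, XX, ZZ, −YY}. -/
def Lam' (ρ : Matrix (Fin 2 × Fin 2) (Fin 2 × Fin 2) ℂ) :
    Matrix (Fin 2 × Fin 2) (Fin 2 × Fin 2) ℂ :=
  ((1/2 : ℂ) • ((1 : Matrix (Fin 2) (Fin 2) ℂ) ⊗ₖ 1)) * ρ * ((1/2 : ℂ) • ((1 : Matrix (Fin 2) (Fin 2) ℂ) ⊗ₖ 1))ᴴ
  + ((1/2 : ℂ) • (PX ⊗ₖ PX)) * ρ * ((1/2 : ℂ) • (PX ⊗ₖ PX))ᴴ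
  + ((1/2 : ℂ) • (PZ ⊗ₖ PZ)) * ρ * ((1/2 : ℂ) • (PZ ⊗ₖ PZ))ᴴ
  + ((-(1/2) : ℂ) • (PY ⊗ₖ PY)) * ρ * ((-(1/2) : ℂ) • (PY ⊗ₖ PY))ᴴ

/-!
Λ' maps the product input |0⟩⟨0| ⊗ |0⟩⟨0| to the classically correlated state
(|00⟩⟨00| + |11⟩⟨11|)/2. The diagonal (1/2, 0, 0, 1/2) of that state violates the identity
M₀₀,₀₀ · M₁₁,₁₁ = M₀₁,₀₁ · M₁₀,₁₀, which every Kronecker product A ⊗ B satisfies since both sides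
equal A₀₀ A₁₁ B₀₀ B₁₁.
-/

theorem Matrix.kronecker_apply_mul_kronecker_apply_comm {R l m n p : Type*} [CommSemigroup R]
    (A : Matrix l m R) (B : Matrix n p R) (i j : l) (i' j' : m) (k k' : n) (q q' : p) :
    (A ⊗ₖ B) (i, k) (i', q) * (A ⊗ₖ B) (j, k') (j', q') =
      (A ⊗ₖ B) (i, k') (i', q') * (A ⊗ₖ B) (j, k) (j', q) := by
  simp only [kroneckerMap_apply]
  ac_rfl

def proj0 : Matrix (Fin 2) (Fin 2) ℂ := diagonal (Pi.single 0 1)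

theorem proj0_posSemidef : proj0.PosSemidef :=
  PosSemidef.diagonal (Pi.single_nonneg.2 zero_le_one)

theorem trace_proj0 : proj0.trace = 1 := by
  simp [proj0, trace_diagonal]

theorem Lam'_proj0_kronecker_proj0_apply_diag (i k : Fin 2) :
    Lam' (proj0 ⊗ₖ proj0) (i, k) (i, k) = if i = k then 1 / 2 else 0 := by
  fin_cases i <;> fin_cases k <;>
    simp [Lam', proj0, PX, PY, PZ, mul_apply, Fintype.sum_prod_type, Fin.sum_univ_two,
      kroneckerMap_apply] <;> norm_num

/-- The second-qubit subsystem is private but not *operator* private for Λ':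
there are no density-matrix-valued assignments τ_A, τ_B with
Λ'(σ_A ⊗ σ_B) = τ_A ⊗ τ_B on all product density inputs. -/
theorem Lam'_not_operator_private :
    ¬ ∃ (τA τB : Matrix (Fin 2) (Fin 2) ℂ → Matrix (Fin 2) (Fin 2) ℂ →
                  Matrix (Fin 2) (Fin 2) ℂ),
      ∀ σA σB : Matrix (Fin 2) (Fin 2) ℂ,
        σA.PosSemidef → σA.trace = 1 → σB.PosSemidef → σB.trace = 1 →
        (τA σA σB).PosSemidef ∧ (τA σA σB).trace = 1 ∧
        (τB σA σB).PosSemidef ∧ (τB σA σB).trace = 1 ∧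
        Lam' (σA ⊗ₖ σB) = (τA σA σB) ⊗ₖ (τB σA σB) := by
  rintro ⟨τA, τB, h⟩
  obtain ⟨-, -, -, -, hprod⟩ :=
    h proj0 proj0 proj0_posSemidef trace_proj0 proj0_posSemidef trace_proj0
  have hswap := kronecker_apply_mul_kronecker_apply_comm
    (τA proj0 proj0) (τB proj0 proj0) 0 1 0 1 0 1 0 1
  simp only [← hprod, Lam'_proj0_kronecker_proj0_apply_diag] at hswap
  norm_num at hswap
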